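/- arXiv:2405.14836 — 4 statements merged into one kernel-verified Lean document; each statement's English description precedes it below -/
import Mathlib

section
/- Let (p_n) be a non-increasing sequence of non-negative reals with convergent sum such that p_i ≤ Σ_{j>i} p_j for all i. Then the set of partial sums {Σ_{n∈A} p_n : A ⊆ ℕ} equals the closed interval [0, Σ_n p_n]. -/
/-! Given `x ∈ [0, ∑ p]`, run the greedy algorithm: take `p n` whenever the running sum stays
`≤ x`. The gap `x - s n` never exceeds the tail `∑_{j ≥ n} p j`: taking `p n` lowers both by `p n`,
and rejecting it means `x - s n < p n ≤ ∑_{j > n} p j` by Kakeya's condition. Since the tails tend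
to `0`, the greedy sums converge to `x`. -/

open Filter Topology

theorem tsum_subtype_mem_Icc {ι : Type*} {p : ι → ℝ} (hnn : ∀ n, 0 ≤ p n) (hsum : Summable p)
    (A : Set ι) : ∑' n : A, p n ∈ Set.Icc 0 (∑' n, p n) :=
  ⟨tsum_nonneg fun n => hnn n, hsum.tsum_subtype_le p A hnn⟩

section Greedy

variable (p : ℕ → ℝ) (x : ℝ)

noncomputable def greedySum : ℕ → ℝ
  | 0 => 0
  | n + 1 => greedySum n + if greedySum n + p n ≤ x then p n else 0

def greedySet : Set ℕ := {n | greedySum p x n + p n ≤ x}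

variable {p x}

theorem greedySum_le (hx : 0 ≤ x) (n : ℕ) : greedySum p x n ≤ x := by
  induction n with
  | zero => exact hx
  | succ n ih =>
    rw [greedySum]
    split_ifs with h
    · exact h
    · simpa using ih

theorem sum_range_indicator_greedySet (n : ℕ) :
    ∑ i ∈ Finset.range n, (greedySet p x).indicator p i = greedySum p x n := by
  induction n with
  | zero => rfl
  | succ n ih =>
    rw [Finset.sum_range_succ, ih, greedySum]
    by_cases h : greedySum p x n + p n ≤ x
    · rw [Set.indicator_of_mem (show n ∈ greedySet p x from h), if_pos h]
    · rw [Set.indicator_of_notMem (show n ∉ greedySet p x from h), if_neg h]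

theorem sub_greedySum_le_tsum_tail (hsum : Summable p)
    (hk : ∀ i, p i ≤ ∑' j : ℕ, p (i + 1 + j)) (hx : x ≤ ∑' n, p n) (n : ℕ) :
    x - greedySum p x n ≤ ∑' j, p (j + n) := by
  induction n with
  | zero => simpa [greedySum] using hx
  | succ n ih =>
    have hsplit : ∑' j, p (j + n) = p n + ∑' j, p (j + (n + 1)) := by
      rw [((summable_nat_add_iff n).2 hsum).tsum_eq_zero_add, zero_add]
      simp only [add_right_comm _ 1 n, add_assoc]
    have hk' : p n ≤ ∑' j, p (j + (n + 1)) := by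
      simpa only [add_comm (n + 1)] using hk n
    rw [greedySum]
    split_ifs with h
    · linarith
    · linarith [not_le.mp h]

theorem tendsto_greedySum (hsum : Summable p) (hk : ∀ i, p i ≤ ∑' j : ℕ, p (i + 1 + j))
    (hx0 : 0 ≤ x) (hx : x ≤ ∑' n, p n) : Tendsto (greedySum p x) atTop (𝓝 x) := by
  have hlower : Tendsto (fun n => x - ∑' j, p (j + n)) atTop (𝓝 x) := by
    simpa using tendsto_const_nhds.sub (tendsto_sum_nat_add p)
  refine tendsto_of_tendsto_of_tendsto_of_le_of_le hlower tendsto_const_nhds (fun n => ?_)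
    (greedySum_le hx0)
  linarith [sub_greedySum_le_tsum_tail hsum hk hx n]

theorem hasSum_greedySet (hsum : Summable p) (hk : ∀ i, p i ≤ ∑' j : ℕ, p (i + 1 + j))
    (hx0 : 0 ≤ x) (hx : x ≤ ∑' n, p n) : HasSum (fun n : greedySet p x => p n) x := by
  refine hasSum_subtype_iff_indicator.2 ((hsum.indicator _).hasSum_iff_tendsto_nat.2 ?_)
  simpa only [sum_range_indicator_greedySet] using tendsto_greedySum hsum hk hx0 hx

end Greedy

theorem kakeya_sufficiency_general (p : ℕ → ℝ)
    (hnn : ∀ n, 0 ≤ p n)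
    (hsum : Summable p)
    (hk : ∀ i, p i ≤ ∑' j : ℕ, p (i + 1 + j)) :
    {x : ℝ | ∃ A : Set ℕ, x = ∑' n : A, p n} = Set.Icc 0 (∑' n, p n) := by
  ext x
  constructor
  · rintro ⟨A, rfl⟩
    exact tsum_subtype_mem_Icc hnn hsum A
  · rintro ⟨hx0, hx⟩
    exact ⟨greedySet p x, (hasSum_greedySet hsum hk hx0 hx).tsum_eq.symm⟩

/-- Kakeya's criterion, sufficiency: if a non-increasing non-negative summable
sequence satisfies `p i ≤ ∑_{j>i} p j` for all `i`, then the set of subset sums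
equals `[0, ∑ p]`. -/
theorem kakeya_sufficiency (p : ℕ → ℝ)
    (hnn : ∀ n, 0 ≤ p n)
    (hmono : ∀ n, p (n + 1) ≤ p n)
    (hsum : Summable p)
    (hk : ∀ i, p i ≤ ∑' j : ℕ, p (i + 1 + j)) :
    {x : ℝ | ∃ A : Set ℕ, x = ∑' n : A, p n} = Set.Icc 0 (∑' n, p n) :=
  kakeya_sufficiency_general p hnn hsum hk
end

section
/- Let (p_n) be a non-increasing sequence of non-negative reals with convergent sum. If the set of partial sums {Σ_{n∈A} p_n : A ⊆ ℕ} equals [0, Σ_n p_n], then p_i ≤ Σ_{j>i} p_j for all i. -/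
/-!
If `p i` exceeded the tail `T = ∑_{j>i} p j`, the midpoint of `T` and `p i` would be a subset sum
`∑_{n∈A} p n`. But either `A` contains some `j ≤ i`, and then its sum is at least `p j ≥ p i`, or
`A` lies beyond `i`, and then its sum is at most `T`.
-/

open Set

theorem tsum_subtype_le_tsum_nat_add {f : ℕ → ℝ} (hf : Summable f) (hnn : ∀ n, 0 ≤ f n)
    {A : Set ℕ} {k : ℕ} (hA : ∀ n ∈ A, k ≤ n) :
    ∑' n : A, f n ≤ ∑' j, f (k + j) := by
  have hhead : ∑ n ∈ Finset.range k, A.indicator f n = 0 :=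
    Finset.sum_eq_zero fun n hn =>
      indicator_of_notMem (fun hnA => by simpa using (Finset.mem_range.1 hn).trans_le (hA n hnA)) f
  calc ∑' n : A, f n = ∑' j, A.indicator f (j + k) := by
        rw [tsum_subtype, ← (hf.indicator A).sum_add_tsum_nat_add k, hhead, zero_add]
    _ ≤ ∑' j, f (k + j) := by
        refine ((hf.indicator A).comp_injective (add_left_injective k)).tsum_le_tsum (fun j => ?_)
          ((summable_nat_add_iff k).2 hf |>.congr fun j => by rw [add_comm])
        rw [add_comm k]
        exact indicator_le_self' (fun n _ => hnn n) _

theorem tsum_subtype_le_tail_or_le_tsum_subtype {p : ℕ → ℝ} (hp : Summable p)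
    (hnn : ∀ n, 0 ≤ p n) (hanti : Antitone p) (A : Set ℕ) (i : ℕ) :
    ∑' n : A, p n ≤ ∑' j, p (i + 1 + j) ∨ p i ≤ ∑' n : A, p n := by
  by_cases hA : ∀ n ∈ A, i + 1 ≤ n
  · exact .inl (tsum_subtype_le_tsum_nat_add hp hnn hA)
  · push Not at hA
    obtain ⟨j, hjA, hji⟩ := hA
    exact .inr <| (hanti (Nat.lt_succ_iff.1 hji)).trans <|
      (hp.subtype A).le_tsum ⟨j, hjA⟩ fun n _ => hnn n.1

/-- Kakeya's criterion, necessity: if the set of subset sums of a non-increasing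
non-negative summable sequence equals `[0, ∑ p]`, then `p i ≤ ∑_{j>i} p j` for all `i`. -/
theorem kakeya_necessity (p : ℕ → ℝ)
    (hnn : ∀ n, 0 ≤ p n)
    (hmono : ∀ n, p (n + 1) ≤ p n)
    (hsum : Summable p)
    (hset : {x : ℝ | ∃ A : Set ℕ, x = ∑' n : A, p n} = Set.Icc 0 (∑' n, p n)) :
    ∀ i, p i ≤ ∑' j : ℕ, p (i + 1 + j) := by
  intro i
  by_contra! hgap
  set T := ∑' j : ℕ, p (i + 1 + j)
  have hT : 0 ≤ T := tsum_nonneg fun _ => hnn _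
  have hpi : p i ≤ ∑' n, p n := hsum.le_tsum i fun n _ => hnn n
  have hmid : (T + p i) / 2 ∈ Icc 0 (∑' n, p n) := ⟨by linarith [hnn i], by linarith⟩
  obtain ⟨A, hA⟩ := hset.ge hmid
  rcases tsum_subtype_le_tail_or_le_tsum_subtype hsum hnn (antitone_nat_of_succ_le hmono) A i
    with h | h <;> linarith
end

section
/- Let α_1,…,α_k and β_1,…,β_k be positive integers with α_i ≥ β_i for all i. Set α = Σ_i α_i and β = Σ_i β_i. Then ∏_{i=1}^k ∏_{j=0}^{β_i−1} (α_i − j) ≤ (α)_β / α^β · (∏_{j=β−k+1}^{β−1} α/(α−j)) · ∏_{i=1}^k α_i^{β_i}, where (α)_β = α(α−1)⋯(α−β+1) denotes the falling factorial. -/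
/-!
Write `(a)_{p+1} / a^{p+1} = ∏_{j=1}^{p} (1 - j/a)`. The core inequality is
`∏_{1≤j≤p} (1 - j/a) · ∏_{1≤j≤q} (1 - j/b) ≤ ∏_{1≤m≤p+q} (1 - m/(a+b))`: merging the ratios
`j/a` and `j/b` in increasing order, at most `⌊xa⌋ + ⌊xb⌋ ≤ x(a+b)` of them are `≤ x`, so the
`m`-th one is at least `m/(a+b)` and the factors compare one by one. Iterating over the `k` blocks,
the left side of the theorem divided by `∏ α_i^{β_i}` is at most `(α)_{β-k+1} / α^{β-k+1}`,
which is what the first two factors on the right multiply out to.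
-/

open Finset

/-- `fallingRatio a p = (a)_{p+1} / a^{p+1}`. -/
noncomputable def fallingRatio (a : ℝ) (p : ℕ) : ℝ := ∏ j ∈ range p, (1 - (j + 1) / a)

section fallingRatio

variable {a b : ℝ} {p q : ℕ}

@[simp]
theorem fallingRatio_zero : fallingRatio a 0 = 1 := prod_range_zero _

theorem fallingRatio_succ : fallingRatio a (p + 1) = fallingRatio a p * (1 - (p + 1) / a) :=
  prod_range_succ _ _

theorem fallingRatio_nonneg (hp : (p : ℝ) ≤ a) : 0 ≤ fallingRatio a p :=
  prod_nonneg fun j hj => by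
    have hj : (j : ℝ) + 1 ≤ p := by exact_mod_cast mem_range.1 hj
    exact sub_nonneg.2 ((div_le_one (by linarith [j.cast_nonneg (α := ℝ)])).2 (by linarith))

theorem fallingRatio_eq_prod_div_pow (ha : a ≠ 0) :
    fallingRatio a p = (∏ j ∈ range (p + 1), (a - j)) / a ^ (p + 1) := by
  have h := prod_mul_pow_card (s := range p) (f := fun j : ℕ => 1 - ((j : ℝ) + 1) / a) (b := a)
  rw [card_range] at h
  rw [eq_div_iff (pow_ne_zero _ ha), prod_range_succ', pow_succ, fallingRatio, ← mul_assoc, h]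
  simp only [Nat.cast_zero, sub_zero, Nat.cast_add, Nat.cast_one]
  congr 1
  exact prod_congr rfl fun j _ => by field_simp

theorem fallingRatio_mul_succ_le (hp : (p : ℝ) ≤ a) (hq : (q : ℝ) + 1 ≤ b)
    (hpq : p * b ≤ (q + 1) * a)
    (h : fallingRatio a p * fallingRatio b q ≤ fallingRatio (a + b) (p + q)) :
    fallingRatio a p * fallingRatio b (q + 1) ≤ fallingRatio (a + b) (p + q + 1) := by
  have hb : 0 < b := by linarith [q.cast_nonneg (α := ℝ)]
  have hab : 0 < a + b := by linarith [p.cast_nonneg (α := ℝ)]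
  have hfactor : 1 - ((q : ℝ) + 1) / b ≤ 1 - (((p + q : ℕ) : ℝ) + 1) / (a + b) := by
    rw [sub_le_sub_iff_left, div_le_div_iff₀ hab hb]
    push_cast
    nlinarith
  rw [fallingRatio_succ, fallingRatio_succ, ← mul_assoc]
  exact mul_le_mul h hfactor (sub_nonneg.2 ((div_le_one hb).2 hq))
    (fallingRatio_nonneg (by push_cast; linarith))

theorem fallingRatio_succ_mul_le (hp : (p : ℝ) + 1 ≤ a) (hq : (q : ℝ) ≤ b)
    (hpq : q * a ≤ (p + 1) * b)
    (h : fallingRatio a p * fallingRatio b q ≤ fallingRatio (a + b) (p + q)) :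
    fallingRatio a (p + 1) * fallingRatio b q ≤ fallingRatio (a + b) (p + 1 + q) := by
  have := fallingRatio_mul_succ_le hq hp hpq (by rwa [mul_comm, add_comm b, add_comm q])
  rwa [mul_comm, add_comm b, show q + p + 1 = p + 1 + q by omega] at this

theorem fallingRatio_mul_le : ∀ {p q : ℕ}, (p : ℝ) ≤ a → (q : ℝ) ≤ b →
    fallingRatio a p * fallingRatio b q ≤ fallingRatio (a + b) (p + q)
  | 0, 0, _, _ => by simp
  | p + 1, 0, hp, hq => by
    push_cast at hp
    exact fallingRatio_succ_mul_le hp hq (by simp; positivity)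
      (fallingRatio_mul_le (by linarith) hq)
  | 0, q + 1, hp, hq => by
    push_cast at hq
    exact fallingRatio_mul_succ_le hp hq (by simp; positivity)
      (fallingRatio_mul_le hp (by linarith))
  | p + 1, q + 1, hp, hq => by
    have hp' : (p : ℝ) + 1 ≤ a := by exact_mod_cast hp
    have hq' : (q : ℝ) + 1 ≤ b := by exact_mod_cast hq
    rcases le_total (((p + 1 : ℕ) : ℝ) * b) ((q + 1) * a) with hpq | hpq
    · exact fallingRatio_mul_succ_le hp hq' hpq (fallingRatio_mul_le hp (by linarith))
    · exact fallingRatio_succ_mul_le hp' hq (by push_cast at hpq ⊢; linarith)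
        (fallingRatio_mul_le (by linarith) hq)

theorem prod_fallingRatio_le {ι : Type*} (s : Finset ι) (a : ι → ℝ) (p : ι → ℕ)
    (h : ∀ i ∈ s, (p i : ℝ) ≤ a i) :
    ∏ i ∈ s, fallingRatio (a i) (p i) ≤ fallingRatio (∑ i ∈ s, a i) (∑ i ∈ s, p i) := by
  classical
  induction s using Finset.induction_on with
  | empty => simp
  | insert i s hi ih =>
    have hi' := h i (mem_insert_self i s)
    have hs : ∀ j ∈ s, (p j : ℝ) ≤ a j := fun j hj => h j (mem_insert_of_mem hj)
    rw [prod_insert hi, sum_insert hi, sum_insert hi]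
    calc _ ≤ fallingRatio (a i) (p i) * fallingRatio (∑ j ∈ s, a j) (∑ j ∈ s, p j) :=
          mul_le_mul_of_nonneg_left (ih hs) (fallingRatio_nonneg hi')
      _ ≤ _ := fallingRatio_mul_le hi' (by push_cast; exact sum_le_sum hs)

end fallingRatio

theorem prod_range_sub_div_pow_mul_prod_Ico {A : ℝ} {m B : ℕ} (hA : A ≠ 0)
    (hBA : (B : ℝ) ≤ A) (hmB : m ≤ B) :
    (∏ j ∈ range B, (A - j)) / A ^ B * ∏ j ∈ Ico m B, A / (A - j) =
      (∏ j ∈ range m, (A - j)) / A ^ m := by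
  have hIco : ∏ j ∈ Ico m B, (A - j) ≠ 0 := prod_ne_zero_iff.2 fun j hj => by
    have : (j : ℝ) < B := by exact_mod_cast (mem_Ico.1 hj).2
    linarith
  obtain ⟨d, rfl⟩ := Nat.exists_eq_add_of_le hmB
  rw [← prod_range_mul_prod_Ico _ hmB, prod_div_distrib, prod_const, Nat.card_Ico,
    Nat.add_sub_cancel_left, pow_add]
  field_simp

theorem prod_falling_factorial_le_general {k : ℕ} (hk : 0 < k)
    (α β : Fin k → ℕ)
    (hβ : ∀ i, 0 < β i) (hle : ∀ i, β i ≤ α i) :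
    (∏ i, ∏ j ∈ Finset.range (β i), ((α i : ℝ) - j)) ≤
      (∏ j ∈ Finset.range (∑ i, β i), ((∑ i, α i : ℕ) - (j : ℝ))) /
          ((∑ i, α i : ℕ) : ℝ) ^ (∑ i, β i)
        * (∏ j ∈ Finset.Ico (∑ i, β i - k + 1) (∑ i, β i),
            ((∑ i, α i : ℕ) : ℝ) / ((∑ i, α i : ℕ) - (j : ℝ)))
        * ∏ i, ((α i : ℝ)) ^ (β i) := by
  have hβα : ∑ i, β i ≤ ∑ i, α i := sum_le_sum fun i _ => hle i
  have hkβ : k ≤ ∑ i, β i := by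
    simpa using sum_le_sum fun i (_ : i ∈ univ) => Nat.one_le_iff_ne_zero.2 (hβ i).ne'
  have hβk : ∑ i, β i - k + 1 = ∑ i, (β i - 1) + 1 := by
    rw [← sum_congr rfl fun i _ => Nat.sub_add_cancel (hβ i), sum_add_distrib]
    simp
  have hα : ∀ i, (α i : ℝ) ≠ 0 := fun i => by exact_mod_cast ((hβ i).trans_le (hle i)).ne'
  have hA : ((∑ i, α i : ℕ) : ℝ) ≠ 0 := by exact_mod_cast (by omega : ∑ i, α i ≠ 0)
  have hblock : ∀ i, ∏ j ∈ range (β i), ((α i : ℝ) - j) =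
      fallingRatio (α i) (β i - 1) * (α i : ℝ) ^ β i := fun i => by
    rw [fallingRatio_eq_prod_div_pow (hα i), Nat.sub_add_cancel (hβ i),
      div_mul_cancel₀ _ (pow_ne_zero _ (hα i))]
  rw [prod_range_sub_div_pow_mul_prod_Ico hA (by exact_mod_cast hβα) (by omega), hβk,
    ← fallingRatio_eq_prod_div_pow hA, prod_congr rfl fun i _ => hblock i, prod_mul_distrib]
  refine mul_le_mul_of_nonneg_right ?_ (by positivity)
  push_cast
  exact prod_fallingRatio_le _ _ _ fun i _ => by exact_mod_cast (Nat.sub_le _ _).trans (hle i)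

/-- Products of falling factorials bounded via the aggregate falling factorial. -/
theorem prod_falling_factorial_le {k : ℕ} (hk : 0 < k)
    (α β : Fin k → ℕ)
    (hα : ∀ i, 0 < α i) (hβ : ∀ i, 0 < β i) (hle : ∀ i, β i ≤ α i) :
    (∏ i, ∏ j ∈ Finset.range (β i), ((α i : ℝ) - j)) ≤
      (∏ j ∈ Finset.range (∑ i, β i), ((∑ i, α i : ℕ) - (j : ℝ))) /
          ((∑ i, α i : ℕ) : ℝ) ^ (∑ i, β i)
        * (∏ j ∈ Finset.Ico (∑ i, β i - k + 1) (∑ i, β i),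
            ((∑ i, α i : ℕ) : ℝ) / ((∑ i, α i : ℕ) - (j : ℝ)))
        * ∏ i, ((α i : ℝ)) ^ (β i) :=
  prod_falling_factorial_le_general hk α β hβ hle
end

section
/- Let α_1,…,α_k, β_1,…,β_k be positive integers with α_i ≥ β_i for all i, and set α = Σ α_i, β = Σ β_i. Then ∏_{i=1}^k ∏_{j=0}^{β_i−1} α_i/(α_i − j) ≥ ∏_{j=0}^{β−k} α/(α − j). -/
/-!
Writing `b i = β i - 1` and `n = ∑ i, b i`, both sides are products of `n` nontrivial factors of
the form `a / (a - j)`. Induct on `n`: pick `i` maximising `b i / α i`. By the mediant inequality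
`b i / α i ≥ n / ∑ α`, so the last factor `α i / (α i - b i)` of the right side dominates the last
factor `∑ α / (∑ α - n)` of the left side, and lowering `b i` by one reduces to the case `n - 1`.
-/

open Finset

theorem div_sub_le_div_sub {A a x y : ℝ} (hx : x < A) (hy : y < a) (h : x * a ≤ y * A) :
    A / (A - x) ≤ a / (a - y) := by
  rw [div_le_div_iff₀ (sub_pos.2 hx) (sub_pos.2 hy)]
  linarith

theorem prod_range_succ_div_sub_nonneg {a : ℝ} {m : ℕ} (h : (m : ℝ) < a) :
    0 ≤ ∏ j ∈ range (m + 1), a / (a - j) := by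
  refine prod_nonneg fun j hj => div_nonneg (by linarith [m.cast_nonneg (α := ℝ)]) ?_
  have : (j : ℝ) ≤ m := by exact_mod_cast Nat.lt_succ_iff.1 (mem_range.1 hj)
  linarith

section

variable {ι : Type*} [Fintype ι]

theorem exists_sum_mul_le_mul_sum [Nonempty ι] {a : ι → ℝ} (ha : ∀ i, 0 < a i) (b : ι → ℝ) :
    ∃ i, (∑ l, b l) * a i ≤ b i * ∑ l, a l := by
  obtain ⟨i, -, hi⟩ := exists_max_image univ (fun l => b l / a l) univ_nonempty
  refine ⟨i, ?_⟩
  rw [sum_mul, mul_sum]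
  exact sum_le_sum fun l _ => (div_le_div_iff₀ (ha l) (ha i)).1 (hi l (mem_univ l))

@[to_additive]
theorem prod_apply_update_mul_of_mul_eq {M : Type*} [CommMonoid M] [DecidableEq ι]
    (F : ι → ℕ → M) (b : ι → ℕ) (i : ι) (c : ℕ) {x : M} (h : F i c * x = F i (b i)) :
    (∏ l, F l (Function.update b i c l)) * x = ∏ l, F l (b l) := by
  simp_rw [Function.apply_update F]
  rw [prod_update_of_mem (mem_univ i), prod_eq_mul_prod_sdiff_singleton_of_mem (mem_univ i), ← h]
  ac_rfl

theorem prod_range_succ_div_sub_sum_le (a : ι → ℝ) (b : ι → ℕ)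
    (hb : ∀ i, (b i : ℝ) < a i) :
    ∏ j ∈ range (∑ i, b i + 1), (∑ i, a i) / (∑ i, a i - j) ≤
      ∏ i, ∏ j ∈ range (b i + 1), a i / (a i - j) := by
  classical
  have ha : ∀ i, 0 < a i := fun i => (b i).cast_nonneg.trans_lt (hb i)
  induction hn : ∑ i, b i generalizing b with
  | zero =>
    have hb0 : ∀ i, b i = 0 := fun i => sum_eq_zero_iff.1 hn i (mem_univ i)
    simp only [hb0, zero_add, prod_range_one, Nat.cast_zero, sub_zero,
      fun i => div_self (ha i).ne', prod_const_one]
    exact div_self_le_one _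
  | succ n ih =>
    have : Nonempty ι := by
      by_contra h
      simp [not_nonempty_iff.1 h] at hn
    have hsum : (∑ i, (b i : ℝ)) = n + 1 := by exact_mod_cast hn
    obtain ⟨i, hi⟩ := exists_sum_mul_le_mul_sum ha (fun l => (b l : ℝ))
    rw [hsum] at hi
    obtain ⟨c, hc⟩ : ∃ c, b i = c + 1 := Nat.exists_eq_succ_of_ne_zero fun h0 => by
      rw [h0, Nat.cast_zero, zero_mul] at hi
      nlinarith [ha i]
    have hle : ∀ l, Function.update b i c l ≤ b l := by
      intro l
      rcases eq_or_ne l i with rfl | hl <;> simp [*]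
    have hb' : ∀ l, (Function.update b i c l : ℝ) < a l :=
      fun l => (Nat.cast_le.2 (hle l)).trans_lt (hb l)
    have hn' : ∑ l, Function.update b i c l = n := by
      have := sum_apply_update_add_of_add_eq (fun _ m => m) b i c hc.symm
      omega
    have hA : (n : ℝ) + 1 < ∑ l, a l := hsum ▸ sum_lt_sum_of_nonempty univ_nonempty fun l _ => hb l
    have hfactor : (∑ l, a l) / (∑ l, a l - (n + 1)) ≤ a i / (a i - (c + 1)) := by
      refine div_sub_le_div_sub hA ?_ ?_
      · simpa [hc] using hb i
      · simpa [hc] using hi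
    calc ∏ j ∈ range (n + 1 + 1), (∑ l, a l) / (∑ l, a l - j)
        = (∏ j ∈ range (n + 1), (∑ l, a l) / (∑ l, a l - j)) *
            ((∑ l, a l) / (∑ l, a l - (n + 1))) := by
          rw [prod_range_succ]; push_cast; rfl
      _ ≤ (∏ l, ∏ j ∈ range (Function.update b i c l + 1), a l / (a l - j)) *
            (a i / (a i - (c + 1))) :=
          mul_le_mul (ih _ hb' hn') hfactor (div_pos (by linarith) (by linarith)).le
            (prod_nonneg fun l _ => prod_range_succ_div_sub_nonneg (hb' l))
      _ = ∏ l, ∏ j ∈ range (b l + 1), a l / (a l - j) := by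
          refine prod_apply_update_mul_of_mul_eq
            (fun l m => ∏ j ∈ range (m + 1), a l / (a l - j)) b i c ?_
          rw [hc, prod_range_succ _ (c + 1)]
          push_cast; rfl

end

theorem prod_ratio_falling_factorial_ge_general {k : ℕ}
    (α β : Fin k → ℕ)
    (hβ : ∀ i, 0 < β i) (hle : ∀ i, β i ≤ α i) :
    (∏ j ∈ Finset.range (∑ i, β i - k + 1),
        ((∑ i, α i : ℕ) : ℝ) / ((∑ i, α i : ℕ) - (j : ℝ))) ≤
      ∏ i, ∏ j ∈ Finset.range (β i), ((α i : ℝ) / ((α i : ℝ) - j)) := by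
  obtain ⟨b, rfl⟩ : ∃ b : Fin k → ℕ, β = fun i => b i + 1 :=
    ⟨fun i => β i - 1, funext fun i => (Nat.sub_add_cancel (hβ i)).symm⟩
  have hsum : ∑ i, (b i + 1) - k + 1 = ∑ i, b i + 1 := by simp [sum_add_distrib]
  rw [hsum]
  push_cast
  exact prod_range_succ_div_sub_sum_le (fun i => (α i : ℝ)) b fun i => by exact_mod_cast hle i

/-- Multiplicative rearrangement inequality for ratios of falling factorials. -/
theorem prod_ratio_falling_factorial_ge {k : ℕ} (hk : 0 < k)
    (α β : Fin k → ℕ)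
    (hα : ∀ i, 0 < α i) (hβ : ∀ i, 0 < β i) (hle : ∀ i, β i ≤ α i) :
    (∏ j ∈ Finset.range (∑ i, β i - k + 1),
        ((∑ i, α i : ℕ) : ℝ) / ((∑ i, α i : ℕ) - (j : ℝ))) ≤
      ∏ i, ∏ j ∈ Finset.range (β i), ((α i : ℝ) / ((α i : ℝ) - j)) :=
  prod_ratio_falling_factorial_ge_general α β hβ hle
end
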